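/- arXiv:2012.09715 — 2 statements merged into one kernel-verified Lean document; each statement's English description precedes it below -/
import Mathlib

section
/- Let φ be the standard Gaussian density and z_q := Φ⁻¹(1 − 2^{−q}). Then lim_{q→∞} z_q / √(q·log 4 − log(q·π·log 16)) = 1; in particular z_q ≥ √(q·log 4 − log(q·π·log 16)) asymptotically. -/
/-!
Write `z = z_q`, so that the Gaussian tail `∫_z^∞ φ` equals `2^{-q}`. Taking logarithms in Mills'
inequalities `z / (1 + z²) · φ(z) ≤ ∫_z^∞ φ ≤ φ(z) / z` gives
`z² + log (2π z²) ≤ q log 4 ≤ z² + log (2π (z + z⁻¹)²)`.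
As `q → ∞` also `z → ∞`, so eventually `(z + z⁻¹)² ≤ z² + log (2π z²) ≤ q log 4`; hence
`q log 4 - log (2π q log 4) ≤ z² ≤ q log 4`, where `2π q log 4 = q π log 16`. The two bounds have
ratio tending to `1` since `log q = o(q)`.
-/

open Real MeasureTheory Filter

noncomputable def phi (z : ℝ) : ℝ := (Real.sqrt (2 * Real.pi))⁻¹ * Real.exp (-z ^ 2 / 2)

noncomputable def Phi (z : ℝ) : ℝ := ∫ s in Set.Iic z, phi s

open Set Topology ProbabilityTheory

lemma phi_eq_gaussianPDFReal : phi = gaussianPDFReal 0 1 := by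
  ext s
  simp [phi, gaussianPDFReal]

lemma phi_pos (s : ℝ) : 0 < phi s := by
  rw [phi_eq_gaussianPDFReal]
  exact gaussianPDFReal_pos _ _ _ one_ne_zero

lemma integrable_phi : Integrable phi := by
  rw [phi_eq_gaussianPDFReal]
  exact integrable_gaussianPDFReal _ _

lemma integral_phi : ∫ s, phi s = 1 := by
  rw [phi_eq_gaussianPDFReal]
  exact integral_gaussianPDFReal_eq_one _ one_ne_zero

lemma hasDerivAt_phi (s : ℝ) : HasDerivAt phi (-(s * phi s)) s := by
  have h := (((hasDerivAt_pow 2 s).fun_neg.div_const 2).exp).const_mul (√(2 * π))⁻¹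
  exact (h : HasDerivAt phi _ s).congr_deriv (by simp only [phi]; ring)

lemma tendsto_phi_atTop : Tendsto phi atTop (𝓝 0) := by
  have h : Tendsto (fun s : ℝ => -s ^ 2 / 2) atTop atBot :=
    (tendsto_neg_atTop_atBot.comp (tendsto_pow_atTop two_ne_zero)).atBot_div_const two_pos
  have := (tendsto_exp_atBot.comp h).const_mul (√(2 * π))⁻¹
  rwa [mul_zero] at this

lemma log_phi (z : ℝ) : log (phi z) = -(log (2 * π) / 2) - z ^ 2 / 2 := by
  rw [phi, log_mul (by positivity) (exp_ne_zero _), log_inv, log_sqrt (by positivity), log_exp]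
  ring

noncomputable def gaussianTail (z : ℝ) : ℝ := ∫ s in Ioi z, phi s

lemma Phi_add_gaussianTail (z : ℝ) : Phi z + gaussianTail z = 1 := by
  rw [Phi, gaussianTail, intervalIntegral.integral_Iic_add_Ioi integrable_phi.integrableOn
    integrable_phi.integrableOn, integral_phi]

lemma Phi_mono : Monotone Phi := fun _ _ hab =>
  setIntegral_mono_set integrable_phi.integrableOn (ae_of_all _ fun s => (phi_pos s).le)
    (Iic_subset_Iic.2 hab).eventuallyLE

lemma gaussianTail_pos (z : ℝ) : 0 < gaussianTail z := by
  rw [gaussianTail, setIntegral_pos_iff_support_of_nonneg_ae (ae_of_all _ fun s => (phi_pos s).le)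
    integrable_phi.integrableOn, Function.support_eq_univ fun s => (phi_pos s).ne', univ_inter]
  simp

lemma integrable_mul_phi : Integrable fun s => s * phi s := by
  convert (integrable_mul_exp_neg_mul_sq (b := 1 / 2) (by norm_num)).const_mul (√(2 * π))⁻¹
    using 2 with s
  rw [phi]; ring_nf

lemma integral_Ioi_mul_phi (z : ℝ) : ∫ s in Ioi z, s * phi s = phi z := by
  simpa using integral_Ioi_of_hasDerivAt_of_tendsto' (f' := fun s => s * phi s)
    (fun s _ => by simpa using (hasDerivAt_phi s).fun_neg) integrable_mul_phi.integrableOn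
    tendsto_phi_atTop.neg

lemma gaussianTail_le_phi_div {z : ℝ} (hz : 0 < z) : gaussianTail z ≤ phi z / z := by
  calc gaussianTail z ≤ ∫ s in Ioi z, z⁻¹ * (s * phi s) := by
        refine setIntegral_mono_on integrable_phi.integrableOn
          (integrable_mul_phi.integrableOn.const_mul _) measurableSet_Ioi fun s hs => ?_
        rw [← mul_assoc, ← div_eq_inv_mul]
        exact le_mul_of_one_le_left (phi_pos s).le ((one_le_div hz).2 (le_of_lt hs))
    _ = phi z / z := by rw [integral_const_mul, integral_Ioi_mul_phi, div_eq_inv_mul]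

lemma hasDerivAt_neg_div_one_add_sq_mul_phi (s : ℝ) :
    HasDerivAt (fun x => -(x / (1 + x ^ 2) * phi x)) (phi s - 2 / (1 + s ^ 2) ^ 2 * phi s) s := by
  have hpos : 0 < 1 + s ^ 2 := by positivity
  have h := (((hasDerivAt_id' s).div ((hasDerivAt_pow 2 s).const_add 1) hpos.ne').mul
    (hasDerivAt_phi s)).neg
  refine h.congr_deriv ?_
  simp only [Pi.div_apply]
  field_simp
  ring

lemma tendsto_div_one_add_sq_mul_phi :
    Tendsto (fun s => s / (1 + s ^ 2) * phi s) atTop (𝓝 0) := by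
  refine squeeze_zero' ?_ ?_ tendsto_phi_atTop
  · filter_upwards [eventually_ge_atTop 0] with s hs
    have := phi_pos s
    positivity
  · filter_upwards [eventually_ge_atTop 0] with s hs
    have : s / (1 + s ^ 2) ≤ 1 := (div_le_one (by positivity)).2 (by nlinarith)
    exact mul_le_of_le_one_left (phi_pos s).le this

lemma div_one_add_sq_mul_phi_le_gaussianTail (z : ℝ) :
    z / (1 + z ^ 2) * phi z ≤ gaussianTail z := by
  have hint : Integrable fun s => phi s - 2 / (1 + s ^ 2) ^ 2 * phi s := by
    refine integrable_phi.sub (integrable_phi.bdd_mul (c := 2)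
      (by fun_prop : Measurable fun s : ℝ => 2 / (1 + s ^ 2) ^ 2).aestronglyMeasurable
      (ae_of_all _ fun s => ?_))
    rw [norm_div, Real.norm_two, norm_pow, Real.norm_of_nonneg (by positivity)]
    exact div_le_self zero_le_two (one_le_pow₀ (by nlinarith))
  have hFTC := integral_Ioi_of_hasDerivAt_of_tendsto' (a := z)
    (fun s _ => hasDerivAt_neg_div_one_add_sq_mul_phi s) hint.integrableOn
    tendsto_div_one_add_sq_mul_phi.neg
  rw [neg_zero, sub_neg_eq_add, zero_add] at hFTC
  rw [← hFTC]
  refine setIntegral_mono_on hint.integrableOn integrable_phi.integrableOn measurableSet_Ioi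
    fun s _ => sub_le_self _ ?_
  have := phi_pos s
  positivity

lemma sq_add_log_le_neg_two_mul_log_gaussianTail {z : ℝ} (hz : 0 < z) :
    z ^ 2 + log (2 * π * z ^ 2) ≤ -2 * log (gaussianTail z) := by
  have h := log_le_log (gaussianTail_pos z) (gaussianTail_le_phi_div hz)
  rw [log_div (phi_pos z).ne' hz.ne', log_phi] at h
  rw [log_mul (by positivity) (by positivity), log_pow]
  push_cast
  linarith

lemma neg_two_mul_log_gaussianTail_le {z : ℝ} (hz : 0 < z) :
    -2 * log (gaussianTail z) ≤ z ^ 2 + log (2 * π * (z + z⁻¹) ^ 2) := by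
  have hratio : z / (1 + z ^ 2) = (z + z⁻¹)⁻¹ := by field_simp; ring
  have h := log_le_log (by have := phi_pos z; positivity) (div_one_add_sq_mul_phi_le_gaussianTail z)
  rw [hratio, log_mul (by positivity) (phi_pos z).ne', log_inv, log_phi] at h
  rw [log_mul (by positivity) (by positivity), log_pow]
  push_cast
  linarith

lemma eventually_add_inv_sq_le_sq_add_log :
    ∀ᶠ z : ℝ in atTop, (z + z⁻¹) ^ 2 ≤ z ^ 2 + log (2 * π * z ^ 2) := by
  have hlog : Tendsto (fun z : ℝ => log (2 * π * z ^ 2)) atTop atTop :=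
    tendsto_log_atTop.comp ((tendsto_pow_atTop two_ne_zero).const_mul_atTop (by positivity))
  filter_upwards [eventually_ge_atTop 1, hlog.eventually_ge_atTop 3] with z hz1 hz3
  have hinv : z⁻¹ ^ 2 ≤ 1 := pow_le_one₀ (by positivity) (inv_le_one_of_one_le₀ hz1)
  have hexpand : (z + z⁻¹) ^ 2 = z ^ 2 + 2 + z⁻¹ ^ 2 := by
    field_simp
    ring
  linarith

section Quantile

variable {Φinv : ℝ → ℝ} (hinv : ∀ y ∈ Ioo (0 : ℝ) 1, Phi (Φinv y) = y)
include hinv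

lemma gaussianTail_quantile {q : ℝ} (hq : 0 < q) :
    gaussianTail (Φinv (1 - 2 ^ (-q))) = 2 ^ (-q) := by
  have hpos : (0 : ℝ) < 2 ^ (-q) := by positivity
  have hlt : (2 : ℝ) ^ (-q) < 1 := rpow_lt_one_of_one_lt_of_neg one_lt_two (neg_lt_zero.2 hq)
  have := Phi_add_gaussianTail (Φinv (1 - 2 ^ (-q)))
  rw [hinv _ ⟨by linarith, by linarith⟩] at this
  linarith

lemma tendsto_quantile_atTop : Tendsto (fun q : ℝ => Φinv (1 - 2 ^ (-q))) atTop atTop := by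
  have htail : Tendsto (fun q : ℝ => (2 : ℝ) ^ (-q)) atTop (𝓝 0) :=
    (tendsto_rpow_atBot_of_base_gt_one 2 one_lt_two).comp tendsto_neg_atTop_atBot
  refine tendsto_atTop.2 fun c => ?_
  filter_upwards [eventually_gt_atTop 0, htail.eventually_lt_const (gaussianTail_pos c)]
    with q hq hsmall
  by_contra! hlt
  have hPhi := Phi_mono hlt.le
  have hc := Phi_add_gaussianTail c
  have hq' := Phi_add_gaussianTail (Φinv (1 - 2 ^ (-q)))
  rw [gaussianTail_quantile hinv hq] at hq'
  linarith

lemma eventually_quantile_sq_mem : ∀ᶠ q : ℝ in atTop,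
    q * log 4 - log (q * π * log 16) ≤ Φinv (1 - 2 ^ (-q)) ^ 2 ∧
      Φinv (1 - 2 ^ (-q)) ^ 2 ≤ q * log 4 := by
  filter_upwards [eventually_gt_atTop 0, (tendsto_quantile_atTop hinv).eventually_gt_atTop 0,
    (tendsto_quantile_atTop hinv).eventually eventually_add_inv_sq_le_sq_add_log] with q hq hz hzq
  set z := Φinv (1 - 2 ^ (-q))
  have hA : -2 * log (gaussianTail z) = q * log 4 := by
    rw [gaussianTail_quantile hinv hq, log_rpow two_pos,
      show (4 : ℝ) = 2 ^ 2 by norm_num, log_pow]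
    push_cast
    ring
  have hupper := sq_add_log_le_neg_two_mul_log_gaussianTail hz
  have hlower := neg_two_mul_log_gaussianTail_le hz
  rw [hA] at hupper hlower
  have hsq_le : z ^ 2 ≤ (z + z⁻¹) ^ 2 := pow_le_pow_left₀ hz.le (by simp [hz.le]) 2
  have hlog : log (2 * π * (z + z⁻¹) ^ 2) ≤ log (q * π * log 16) := by
    rw [show q * π * log 16 = 2 * π * (q * log 4) by
      rw [show (16 : ℝ) = 4 ^ 2 by norm_num, log_pow]; push_cast; ring]
    gcongr
    linarith
  constructor <;> linarith

end Quantile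

lemma tendsto_mul_log_four_div_sub_log :
    Tendsto (fun q : ℝ => q * log 4 / (q * log 4 - log (q * π * log 16))) atTop (𝓝 1) := by
  have hc : 0 < π * log 16 := by positivity
  have hr : Tendsto (fun q : ℝ => log (q * π * log 16) / (q * log 4)) atTop (𝓝 0) := by
    have := (tendsto_pow_log_div_mul_add_atTop (log 4 / (π * log 16)) 0 1 (by positivity)).comp
      (tendsto_id.atTop_mul_const hc)
    refine this.congr' (eventually_gt_atTop 0 |>.mono fun q hq => ?_)
    simp only [Function.comp_apply, id, pow_one, add_zero, mul_assoc]
    field_simp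
  have := (tendsto_const_nhds.sub hr).inv₀ (by norm_num : (1 : ℝ) - 0 ≠ 0)
  rw [sub_zero, inv_one] at this
  refine this.congr' (eventually_gt_atTop 0 |>.mono fun q hq => ?_)
  have : q * log 4 ≠ 0 := by positivity
  rw [one_sub_div this, inv_div]

lemma tendsto_div_sqrt_of_sq_squeeze {α : Type*} {l : Filter α} {z L U : α → ℝ}
    (hL : ∀ᶠ x in l, 0 < L x) (hz : ∀ᶠ x in l, 0 ≤ z x) (hlower : ∀ᶠ x in l, L x ≤ z x ^ 2)
    (hupper : ∀ᶠ x in l, z x ^ 2 ≤ U x) (hUL : Tendsto (fun x => U x / L x) l (𝓝 1)) :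
    Tendsto (fun x => z x / √(L x)) l (𝓝 1) := by
  have hsq : Tendsto (fun x => z x ^ 2 / L x) l (𝓝 1) := by
    refine tendsto_of_tendsto_of_tendsto_of_le_of_le' tendsto_const_nhds hUL ?_ ?_
    · filter_upwards [hL, hlower] with x hLx hx
      exact (one_le_div hLx).2 hx
    · filter_upwards [hL, hupper] with x hLx hx
      exact div_le_div_of_nonneg_right hx hLx.le
  have := (continuous_sqrt.tendsto 1).comp hsq
  rw [sqrt_one] at this
  refine this.congr' ?_
  filter_upwards [hz] with x hx
  rw [Function.comp_apply, sqrt_div (sq_nonneg _), sqrt_sq hx]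

theorem tail_quantile_lower_asymptotic (Φinv : ℝ → ℝ)
    (hinv : ∀ y ∈ Set.Ioo (0 : ℝ) 1, Phi (Φinv y) = y) :
    Tendsto (fun q : ℝ =>
        Φinv (1 - (2 : ℝ) ^ (-q)) /
          Real.sqrt (q * Real.log 4 - Real.log (q * Real.pi * Real.log 16)))
      atTop (nhds 1) ∧
    ∀ᶠ q : ℝ in atTop,
      Real.sqrt (q * Real.log 4 - Real.log (q * Real.pi * Real.log 16)) ≤
        Φinv (1 - (2 : ℝ) ^ (-q)) := by
  have hsq := eventually_quantile_sq_mem hinv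
  have hz := (tendsto_quantile_atTop hinv).eventually_ge_atTop 0
  have hratio := tendsto_mul_log_four_div_sub_log
  have hL : ∀ᶠ q : ℝ in atTop, 0 < q * log 4 - log (q * π * log 16) := by
    filter_upwards [hratio.eventually_const_lt one_pos, eventually_gt_atTop 0] with q hq hq0
    exact (div_pos_iff_of_pos_left (by positivity)).1 hq
  refine ⟨tendsto_div_sqrt_of_sq_squeeze hL hz (hsq.mono fun _ h => h.1)
    (hsq.mono fun _ h => h.2) hratio, ?_⟩
  filter_upwards [hsq, hz] with q hq hq0
  exact (sqrt_le_left hq0).2 hq.1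
end

section
/- Let f be twice continuously differentiable on [a,b] and let L(f)(u) := f(u) − α(f) − β(f)·u denote the error of the L²-optimal linear approximation. Then for each u ∈ [a,b], |L(f)(u)| ≤ 6·(b − a)²·max_{ξ∈[a,b]} |f''(ξ)|. -/
/-!
The residual `g = f - α - β x` of the least-squares line is orthogonal to every affine function.
Orthogonality to `1` gives a zero `c` of `g` in `[a, b]`, and since `g'' = f''`, Taylor's bound
gives `g x = γ (x - c) + R x` with `γ = f' c - β` and `|R x| ≤ M (x - c)²`. Orthogonality
to `x - c` then gives `γ ∫ (x - c)² = -∫ (x - c) R x`, whence `|γ| ≤ (b - a) M`, and altogether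
`|g u| ≤ 2 (b - a)² M`.
-/

open Real MeasureTheory Set

theorem integral_mul_eq_zero_of_forall_integral_sq_le {X : Type*} [MeasurableSpace X]
    {μ : Measure X} {g w : X → ℝ} (hg : Integrable (fun x ↦ g x ^ 2) μ)
    (hgw : Integrable (fun x ↦ g x * w x) μ) (hw : Integrable (fun x ↦ w x ^ 2) μ)
    (hmin : ∀ t : ℝ, ∫ x, g x ^ 2 ∂μ ≤ ∫ x, (g x - t * w x) ^ 2 ∂μ) :
    ∫ x, g x * w x ∂μ = 0 := by
  have hexpand : ∀ t : ℝ, ∫ x, (g x - t * w x) ^ 2 ∂μ =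
      ∫ x, g x ^ 2 ∂μ - 2 * t * ∫ x, g x * w x ∂μ + t ^ 2 * ∫ x, w x ^ 2 ∂μ := by
    intro t
    calc ∫ x, (g x - t * w x) ^ 2 ∂μ
        = ∫ x, (g x ^ 2 - 2 * t * (g x * w x)) + t ^ 2 * w x ^ 2 ∂μ := by
          congr 1 with x
          ring
      _ = _ := by
          rw [integral_add, integral_sub, integral_const_mul, integral_const_mul]
          exacts [hg, hgw.const_mul _, hg.sub (hgw.const_mul _), hw.const_mul _]
  have hdiscrim :=
    discrim_le_zero (a := ∫ x, w x ^ 2 ∂μ) (b := -2 * ∫ x, g x * w x ∂μ) (c := 0)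
      fun t ↦ by nlinarith [hmin t, hexpand t]
  rw [discrim] at hdiscrim
  nlinarith [sq_nonneg (∫ x, g x * w x ∂μ)]

theorem setIntegral_residual_mul_affine_eq_zero {a b α β : ℝ} {f : ℝ → ℝ}
    (hf : ContinuousOn f (Icc a b))
    (hmin : ∀ α' β' : ℝ, ∫ x in Icc a b, (f x - α - β * x) ^ 2 ≤
      ∫ x in Icc a b, (f x - α' - β' * x) ^ 2) (p q : ℝ) :
    ∫ x in Icc a b, (f x - α - β * x) * (p + q * x) = 0 := by
  have hg : ContinuousOn (fun x ↦ f x - α - β * x) (Icc a b) := by fun_prop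
  have hw : ContinuousOn (fun x : ℝ ↦ p + q * x) (Icc a b) := by fun_prop
  refine integral_mul_eq_zero_of_forall_integral_sq_le (hg.pow 2).integrableOn_Icc
    (hg.mul hw).integrableOn_Icc (hw.pow 2).integrableOn_Icc fun t ↦ ?_
  convert hmin (α + t * p) (β + t * q) using 3 with x
  ring

theorem exists_mem_Icc_eq_zero_of_setIntegral_eq_zero {a b : ℝ} {g : ℝ → ℝ} (hab : a < b)
    (hg : ContinuousOn g (Icc a b)) (hint : ∫ x in Icc a b, g x = 0) :
    ∃ c ∈ Icc a b, g c = 0 := by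
  obtain ⟨c, hc, hgc⟩ := exists_eq_setAverage (μ := volume) (isConnected_Icc hab.le) hg
    hg.integrableOn_Icc measure_Icc_lt_top.ne (by simp [hab])
  exact ⟨c, hc, by rw [hgc, setAverage_eq, hint, smul_zero]⟩

theorem abs_sub_sub_mul_sub_le_of_hasDerivWithinAt {f f' f'' : ℝ → ℝ} {s : Set ℝ} {M : ℝ}
    (hs : Convex ℝ s) (hf' : ∀ x ∈ s, HasDerivWithinAt f (f' x) s x)
    (hf'' : ∀ x ∈ s, HasDerivWithinAt f' (f'' x) s x) (hM : ∀ x ∈ s, |f'' x| ≤ M)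
    {c x : ℝ} (hc : c ∈ s) (hx : x ∈ s) :
    |f x - f c - f' c * (x - c)| ≤ M * (x - c) ^ 2 := by
  have hM0 : 0 ≤ M := (abs_nonneg _).trans (hM c hc)
  have hsub : uIcc c x ⊆ s := segment_eq_uIcc c x ▸ hs.segment_subset hc hx
  have hderiv : ∀ y ∈ uIcc c x,
      HasDerivWithinAt (fun y ↦ f y - f' c * y) (f' y - f' c) (uIcc c x) y := fun y hy ↦ by
    simpa using ((hf' y (hsub hy)).mono hsub).fun_sub ((hasDerivWithinAt_id y _).const_mul (f' c))
  have hbound : ∀ y ∈ uIcc c x, ‖f' y - f' c‖ ≤ M * |x - c| := fun y hy ↦ by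
    have hlip := hs.norm_image_sub_le_of_norm_hasDerivWithin_le hf''
      (by simpa only [Real.norm_eq_abs] using hM) hc (hsub hy)
    rw [Real.norm_eq_abs] at hlip
    exact hlip.trans (mul_le_mul_of_nonneg_left (abs_sub_left_of_mem_uIcc hy) hM0)
  have hmvt := (convex_uIcc c x).norm_image_sub_le_of_norm_hasDerivWithin_le hderiv hbound
    left_mem_uIcc right_mem_uIcc
  rw [Real.norm_eq_abs, Real.norm_eq_abs, mul_assoc, abs_mul_abs_self, ← sq] at hmvt
  convert hmvt using 2
  ring

theorem setIntegral_Icc_sub_sq_pos {a b : ℝ} (hab : a < b) (c : ℝ) :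
    0 < ∫ x in Icc a b, (x - c) ^ 2 := by
  rw [integral_Icc_eq_integral_Ioc, ← intervalIntegral.integral_of_le hab.le,
    intervalIntegral.integral_comp_sub_right (fun x ↦ x ^ 2), integral_pow]
  have := Odd.strictMono_pow (R := ℝ) (by decide : Odd 3) (sub_lt_sub_right hab c)
  simp only at this
  linarith

section SlopeBound

variable {g : ℝ → ℝ} {a b c γ M : ℝ}

theorem abs_le_mul_of_setIntegral_mul_sub_eq_zero (hab : a < b) (hc : c ∈ Icc a b)
    (hg : ContinuousOn g (Icc a b)) (horth : ∫ x in Icc a b, g x * (x - c) = 0)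
    (hR : ∀ x ∈ Icc a b, |g x - γ * (x - c)| ≤ M * (x - c) ^ 2) :
    |γ| ≤ (b - a) * M := by
  have hP := setIntegral_Icc_sub_sq_pos hab c
  have hγP : γ * ∫ x in Icc a b, (x - c) ^ 2 =
      ∫ x in Icc a b, (x - c) * (γ * (x - c) - g x) := by
    have hsq : IntegrableOn (fun x ↦ γ * (x - c) ^ 2) (Icc a b) :=
      (by fun_prop : Continuous fun x : ℝ ↦ γ * (x - c) ^ 2).integrableOn_Icc
    have hprod : IntegrableOn (fun x ↦ g x * (x - c)) (Icc a b) :=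
      (hg.mul (continuousOn_id.sub continuousOn_const)).integrableOn_Icc
    calc γ * ∫ x in Icc a b, (x - c) ^ 2
        = (∫ x in Icc a b, γ * (x - c) ^ 2) - ∫ x in Icc a b, g x * (x - c) := by
          rw [horth, sub_zero, integral_const_mul]
      _ = _ := by
          rw [← integral_sub hsq hprod]
          congr 1 with x
          ring
  have hbound : |∫ x in Icc a b, (x - c) * (γ * (x - c) - g x)| ≤
      ∫ x in Icc a b, (b - a) * M * (x - c) ^ 2 := by
    rw [← Real.norm_eq_abs]
    refine norm_integral_le_of_norm_le
      ((by fun_prop : Continuous fun x : ℝ ↦ (b - a) * M * (x - c) ^ 2).integrableOn_Icc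
        (μ := volume))
      (ae_restrict_of_forall_mem measurableSet_Icc fun x hx ↦ ?_)
    have hxc : |x - c| ≤ b - a :=
      abs_sub_le_iff.2 ⟨by linarith [hx.2, hc.1], by linarith [hx.1, hc.2]⟩
    rw [Real.norm_eq_abs, abs_mul, abs_sub_comm (γ * (x - c)), mul_assoc]
    exact mul_le_mul hxc (hR x hx) (abs_nonneg _) (by linarith)
  rw [integral_const_mul, ← hγP, abs_mul, abs_of_pos hP] at hbound
  exact le_of_mul_le_mul_right hbound hP

theorem abs_le_two_mul_sq_mul_of_setIntegral_mul_sub_eq_zero (hab : a < b)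
    (hc : c ∈ Icc a b) (hg : ContinuousOn g (Icc a b))
    (horth : ∫ x in Icc a b, g x * (x - c) = 0)
    (hR : ∀ x ∈ Icc a b, |g x - γ * (x - c)| ≤ M * (x - c) ^ 2) {u : ℝ} (hu : u ∈ Icc a b) :
    |g u| ≤ 2 * (b - a) ^ 2 * M := by
  have hγ := abs_le_mul_of_setIntegral_mul_sub_eq_zero hab hc hg horth hR
  have hM0 : 0 ≤ M :=
    nonneg_of_mul_nonneg_right ((abs_nonneg γ).trans hγ) (sub_pos.2 hab)
  have huc : |u - c| ≤ b - a :=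
    abs_sub_le_iff.2 ⟨by linarith [hu.2, hc.1], by linarith [hu.1, hc.2]⟩
  calc |g u| ≤ |γ| * |u - c| + M * |u - c| ^ 2 := by
        rw [← abs_mul, sq_abs]
        linarith [abs_sub_abs_le_abs_sub (g u) (γ * (u - c)), hR u hu]
    _ ≤ (b - a) * M * (b - a) + M * (b - a) ^ 2 := by gcongr
    _ = 2 * (b - a) ^ 2 * M := by ring

end SlopeBound

theorem peano_kernel_error_bound_general (a b : ℝ) (hab : a < b)
    (f f' f'' : ℝ → ℝ)
    (hf' : ∀ x ∈ Set.Icc a b, HasDerivWithinAt f (f' x) (Set.Icc a b) x)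
    (hf'' : ∀ x ∈ Set.Icc a b, HasDerivWithinAt f' (f'' x) (Set.Icc a b) x)
    (α β : ℝ)
    (hmin : ∀ α' β' : ℝ,
      (∫ u in Set.Icc a b, (f u - α - β * u) ^ 2) ≤
        ∫ u in Set.Icc a b, (f u - α' - β' * u) ^ 2)
    (M : ℝ) (hM : ∀ ξ ∈ Set.Icc a b, |f'' ξ| ≤ M) :
    ∀ u ∈ Set.Icc a b, |f u - α - β * u| ≤ 6 * (b - a) ^ 2 * M := by
  intro u hu
  have hf : ContinuousOn f (Icc a b) := fun x hx ↦ (hf' x hx).continuousWithinAt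
  have hg : ContinuousOn (fun x ↦ f x - α - β * x) (Icc a b) := by fun_prop
  have horth := setIntegral_residual_mul_affine_eq_zero hf hmin
  obtain ⟨c, hc, hgc⟩ := exists_mem_Icc_eq_zero_of_setIntegral_eq_zero hab hg
    (by simpa using horth 1 0)
  have hR (x) (hx : x ∈ Icc a b) :
      |f x - α - β * x - (f' c - β) * (x - c)| ≤ M * (x - c) ^ 2 := by
    convert abs_sub_sub_mul_sub_le_of_hasDerivWithinAt (convex_Icc a b) hf' hf'' hM hc hx using 2
    linear_combination hgc
  have hM0 : 0 ≤ M := (abs_nonneg _).trans (hM c hc)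
  calc |f u - α - β * u| ≤ 2 * (b - a) ^ 2 * M :=
        abs_le_two_mul_sq_mul_of_setIntegral_mul_sub_eq_zero hab hc hg
          (by simpa [neg_add_eq_sub] using horth (-c) 1) hR hu
    _ ≤ 6 * (b - a) ^ 2 * M := by nlinarith [sq_nonneg (b - a)]

theorem peano_kernel_error_bound (a b : ℝ) (hab : a < b)
    (f f' f'' : ℝ → ℝ)
    (hf' : ∀ x ∈ Set.Icc a b, HasDerivWithinAt f (f' x) (Set.Icc a b) x)
    (hf'' : ∀ x ∈ Set.Icc a b, HasDerivWithinAt f' (f'' x) (Set.Icc a b) x)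
    (hf''cont : ContinuousOn f'' (Set.Icc a b))
    (α β : ℝ)
    (hmin : ∀ α' β' : ℝ,
      (∫ u in Set.Icc a b, (f u - α - β * u) ^ 2) ≤
        ∫ u in Set.Icc a b, (f u - α' - β' * u) ^ 2)
    (M : ℝ) (hM : ∀ ξ ∈ Set.Icc a b, |f'' ξ| ≤ M) :
    ∀ u ∈ Set.Icc a b, |f u - α - β * u| ≤ 6 * (b - a) ^ 2 * M :=
  peano_kernel_error_bound_general a b hab f f' f'' hf' hf'' α β hmin M hM
end
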